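/- If p is a prime dividing F_{p+1}, then R_n^(p+1) ≡ I_n (mod p) when n is odd, and R_n^(p+1) ≡ -I_n (mod p) when n is even. -/

import Mathlib

/-- `R n` over `ZMod p`: the `n × n` matrix whose 1-based `(i,j)` entry is `C(i-1, n-j)`. -/
def RmatMod (p n : ℕ) : Matrix (Fin n) (Fin n) (ZMod p) :=
  Matrix.of fun i j => (Nat.choose i.1 (n - 1 - j.1) : ZMod p)

/-!
Let `Q = !![1, 1; 1, 0]`. In the basis `x^k y^(n-1-k)` of the binary forms of degree `n - 1`, the
substitution `x ↦ x + y, y ↦ x` (the linear substitution by `Q`) has matrix `R_n`, and its `t`-th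
power is the substitution by `Q^t`. Hence `R_n^t = c^(n-1)` as soon as `Q^t = c`.
Since `Q^(t+1) = !![F_{t+2}, F_{t+1}; F_{t+1}, F_t]`, the hypothesis `p ∣ F_{p+1}` makes
`Q^p = !![0, F_p; F_p, -F_p]` modulo `p`, while Frobenius turns `Q^2 = Q + 1` into
`(Q^p)^2 = Q^p + 1`; comparing entries forces `F_p ≡ -1`, so that `Q^(p+1) = -1`.
-/

open MvPolynomial

theorem add_pow_mul_pow_eq_sum_fin {R : Type*} [CommSemiring R] (x y : R) {n k : ℕ} (hk : k < n) :
    (x + y) ^ k * x ^ (n - 1 - k) =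
      ∑ i : Fin n, k.choose (n - 1 - i) • (x ^ (i : ℕ) * y ^ (n - 1 - i)) := by
  have hrev : ∑ i : Fin n, k.choose (n - 1 - i) • (x ^ (i : ℕ) * y ^ (n - 1 - i)) =
      ∑ s ∈ Finset.range n, k.choose s • (x ^ (n - 1 - s) * y ^ s) := by
    rw [← Equiv.sum_comp Fin.revPerm, ← Fin.sum_univ_eq_sum_range
      (fun s => k.choose s • (x ^ (n - 1 - s) * y ^ s))]
    refine Finset.sum_congr rfl fun i _ => ?_
    rw [Fin.revPerm_apply, Fin.val_rev, show n - 1 - (n - (i + 1)) = i by omega,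
      show n - (i + 1) = n - 1 - i by omega]
  have htrunc : ∑ s ∈ Finset.range (k + 1), k.choose s • (x ^ (n - 1 - s) * y ^ s) =
      ∑ s ∈ Finset.range n, k.choose s • (x ^ (n - 1 - s) * y ^ s) := by
    refine Finset.sum_subset (Finset.range_subset_range.2 hk) fun s _ hs => ?_
    rw [Nat.choose_eq_zero_of_lt (by simpa using hs), zero_smul]
  rw [hrev, ← htrunc, add_comm, add_pow, Finset.sum_mul]
  refine Finset.sum_congr rfl fun s hs => ?_
  have hs : s ≤ k := Nat.lt_succ_iff.1 (Finset.mem_range.1 hs)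
  rw [nsmul_eq_mul, show n - 1 - s = k - s + (n - 1 - k) by omega, pow_add]
  ring

theorem Module.End.pow_apply_eq_sum_matrix_pow_smul {K V ι : Type*} [CommSemiring K]
    [AddCommMonoid V] [Module K V] [Fintype ι] [DecidableEq ι] {f : Module.End K V} {v : ι → V}
    {M : Matrix ι ι K} (hf : ∀ k, f (v k) = ∑ i, M k i • v i) (t : ℕ) (k : ι) :
    (f ^ t) (v k) = ∑ i, (M ^ t) k i • v i := by
  induction t generalizing k with
  | zero => simp [Matrix.one_apply]
  | succ t ih =>
    rw [pow_succ', Module.End.mul_apply, ih, pow_succ]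
    simp only [map_sum, map_smul, hf, Finset.smul_sum, smul_smul, Matrix.mul_apply,
      Finset.sum_smul]
    exact Finset.sum_comm

section Substitution

variable {K ι : Type*} [CommRing K] [Fintype ι] [DecidableEq ι]

theorem Matrix.toMvPolynomial_smul_one (c : K) :
    (c • 1 : Matrix ι ι K).toMvPolynomial = fun i => C c * X i := by
  ext1 i
  simp [Matrix.toMvPolynomial, Matrix.one_apply, ← C_mul_X_eq_monomial, apply_ite C, ite_mul]

theorem bind₁_toMvPolynomial_pow (A : Matrix ι ι K) (t : ℕ) :
    bind₁ (A ^ t).toMvPolynomial = bind₁ A.toMvPolynomial ^ t := by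
  induction t with
  | zero =>
    rw [pow_zero, pow_zero, Matrix.toMvPolynomial_one, bind₁_X_left]
    rfl
  | succ t ih =>
    refine algHom_ext fun i => ?_
    rw [pow_succ, bind₁_X_right, Matrix.toMvPolynomial_mul, pow_succ', AlgHom.mul_apply, ← ih,
      bind₁_X_right]

end Substitution

def fibMatrix (K : Type*) [CommRing K] : Matrix (Fin 2) (Fin 2) K := !![1, 1; 1, 0]

section Fibonacci

variable {K : Type*} [CommRing K]

theorem fibMatrix_sq : fibMatrix K ^ 2 = fibMatrix K + 1 := by
  ext i j
  fin_cases i <;> fin_cases j <;> simp [fibMatrix, sq]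

theorem fibMatrix_pow_succ (t : ℕ) :
    fibMatrix K ^ (t + 1) =
      !![(Nat.fib (t + 2) : K), Nat.fib (t + 1); Nat.fib (t + 1), Nat.fib t] := by
  induction t with
  | zero => simp [fibMatrix]
  | succ t ih =>
    rw [pow_succ, ih, fibMatrix, Matrix.mul_fin_two, Nat.fib_add_two (n := t + 1),
      Nat.fib_add_two (n := t)]
    push_cast
    simp [add_comm]

theorem fib_prime_eq_neg_one_of_dvd_fib_succ {p : ℕ} [Fact p.Prime] (h : p ∣ Nat.fib (p + 1)) :
    (Nat.fib p : ZMod p) = -1 := by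
  obtain ⟨q, rfl⟩ := Nat.exists_eq_add_one_of_ne_zero (Fact.out : p.Prime).ne_zero
  have hq2 : (Nat.fib (q + 2) : ZMod (q + 1)) = 0 := (ZMod.natCast_eq_zero_iff _ _).2 h
  have hq : (Nat.fib q : ZMod (q + 1)) = -Nat.fib (q + 1) := by
    rw [Nat.fib_add_two, Nat.cast_add] at hq2
    linear_combination hq2
  have hfrob : (fibMatrix (ZMod (q + 1)) ^ (q + 1)) ^ 2 = fibMatrix _ ^ (q + 1) + 1 := by
    rw [← pow_mul, mul_comm, pow_mul, fibMatrix_sq,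
      add_pow_char_of_commute _ (Commute.one_right _), one_pow]
  rw [fibMatrix_pow_succ, hq2, hq, sq, Matrix.mul_fin_two, Matrix.one_fin_two] at hfrob
  have h00 := congrFun (congrFun hfrob 0) 0
  have h01 := congrFun (congrFun hfrob 0) 1
  simp only [Matrix.add_apply, Matrix.of_apply, Matrix.cons_val', Matrix.cons_val_zero,
    Matrix.cons_val_one, Matrix.empty_val', Matrix.cons_val_fin_one] at h00 h01
  linear_combination -(h00 + h01)

theorem fibMatrix_pow_prime_add_one {p : ℕ} [Fact p.Prime] (h : p ∣ Nat.fib (p + 1)) :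
    fibMatrix (ZMod p) ^ (p + 1) = -1 := by
  have h1 : (Nat.fib (p + 1) : ZMod p) = 0 := (ZMod.natCast_eq_zero_iff _ _).2 h
  rw [fibMatrix_pow_succ, Nat.fib_add_two, Nat.cast_add, h1,
    fib_prime_eq_neg_one_of_dvd_fib_succ h, Matrix.one_fin_two]
  simp

theorem fibMatrix_toMvPolynomial : (fibMatrix K).toMvPolynomial = ![X 0 + X 1, X 0] := by
  ext1 i
  fin_cases i <;> simp [Matrix.toMvPolynomial, fibMatrix, Fin.sum_univ_two, ← C_mul_X_eq_monomial]

end Fibonacci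

def Rmat (K : Type*) [CommRing K] (n : ℕ) : Matrix (Fin n) (Fin n) K :=
  Matrix.of fun i j => (Nat.choose i (n - 1 - j) : K)

section Rmat

variable {K : Type*} [CommRing K]

noncomputable def binaryMonomial (n : ℕ) (k : Fin n) : MvPolynomial (Fin 2) K :=
  X 0 ^ (k : ℕ) * X 1 ^ (n - 1 - k)

theorem linearIndependent_binaryMonomial (n : ℕ) :
    LinearIndependent K (binaryMonomial (K := K) n) := by
  let exponent : Fin n → Fin 2 →₀ ℕ := fun k =>
    Finsupp.single (0 : Fin 2) (k : ℕ) + Finsupp.single 1 (n - 1 - k)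
  have hexponent : Function.Injective exponent := fun i j hij => by
    simpa [exponent, Fin.ext_iff] using congrArg (· 0) hij
  have hmonomial : binaryMonomial n = basisMonomials (Fin 2) K ∘ exponent := by
    ext1 k
    simp [exponent, binaryMonomial, coe_basisMonomials, X_pow_eq_monomial, monomial_mul]
  rw [hmonomial]
  exact (basisMonomials (Fin 2) K).linearIndependent.comp _ hexponent

theorem bind₁_fibMatrix_binaryMonomial (n : ℕ) (k : Fin n) :
    bind₁ (fibMatrix K).toMvPolynomial (binaryMonomial n k) =
      ∑ i, Rmat K n k i • binaryMonomial n i := by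
  simp only [fibMatrix_toMvPolynomial, binaryMonomial, map_mul, map_pow, bind₁_X_right,
    Matrix.cons_val_zero, Matrix.cons_val_one]
  rw [add_pow_mul_pow_eq_sum_fin _ _ k.2]
  simp [Rmat, Nat.cast_smul_eq_nsmul]

theorem bind₁_smul_one_binaryMonomial (n : ℕ) (c : K) (k : Fin n) :
    bind₁ (c • 1 : Matrix (Fin 2) (Fin 2) K).toMvPolynomial (binaryMonomial n k) =
      c ^ (n - 1) • binaryMonomial n k := by
  obtain ⟨j, hj⟩ : ∃ j, n - 1 = k + j := ⟨n - 1 - k, by omega⟩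
  rw [Matrix.toMvPolynomial_smul_one]
  simp only [binaryMonomial, map_mul, map_pow, bind₁_X_right, smul_eq_C_mul, hj,
    Nat.add_sub_cancel_left]
  ring

theorem Rmat_pow_eq_smul_one {n t : ℕ} {c : K} (h : fibMatrix K ^ t = c • 1) :
    Rmat K n ^ t = c ^ (n - 1) • 1 := by
  ext k j
  refine Fintype.linearIndependent_iffₛ.1 (linearIndependent_binaryMonomial n) _ _ ?_ j
  rw [← Module.End.pow_apply_eq_sum_matrix_pow_smul
      (f := AlgHom.toEnd (bind₁ (fibMatrix K).toMvPolynomial)) (bind₁_fibMatrix_binaryMonomial n),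
    ← map_pow, AlgHom.toEnd_apply, AlgHom.toLinearMap_apply, ← bind₁_toMvPolynomial_pow, h,
    bind₁_smul_one_binaryMonomial]
  simp [Matrix.one_apply]

end Rmat

/-- If `p` is a prime dividing `F_{p+1}`, then `R_n ^ (p+1) ≡ I (mod p)` for odd `n`
and `R_n ^ (p+1) ≡ -I (mod p)` for even `n`. -/
theorem Rmat_pow_p_add_one (p n : ℕ) (hp : p.Prime) (hdvd : p ∣ Nat.fib (p + 1)) :
    (Odd n → RmatMod p n ^ (p + 1) = 1) ∧
      (Even n → RmatMod p n ^ (p + 1) = -1) := by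
  have := Fact.mk hp
  have hR : RmatMod p n ^ (p + 1) = (-1 : ZMod p) ^ (n - 1) • 1 :=
    Rmat_pow_eq_smul_one (by rw [fibMatrix_pow_prime_add_one hdvd, neg_one_smul])
  refine ⟨fun hn => ?_, fun hn => ?_⟩
  · rw [hR, (Nat.Odd.sub_odd hn odd_one).neg_one_pow, one_smul]
  · rcases Nat.eq_zero_or_pos n with rfl | hpos
    · exact Subsingleton.elim _ _
    · rw [hR, (Nat.Even.sub_odd hpos hn odd_one).neg_one_pow, neg_one_smul]
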